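/- Let M ∈ ℝ^{N×N} be symmetric positive semidefinite, σ ∈ [0,1), and let sequences (z_k)_{k≥0}, (z̃_k)_{k≥1} in ℝ^N and nonnegative reals (η_k)_{k≥0} satisfy, for every k ≥ 1, ‖z̃_k − z_k‖_M² + η_k ≤ σ‖z̃_k − z_{k−1}‖_M² + η_{k−1}. Then for every k ≥ 1 and every z ∈ ℝ^N, 2 Σ_{i=1}^{k} ⟨M(z_{i−1} − z_i), z̃_i − z⟩ ≤ ‖z − z_0‖_M² + η_0. -/

import Mathlib

/-!
By the four-point identity for a symmetric `M`,
`2⟨M(z_{i-1} - z_i), z̃_i - z⟩ = ‖z - z_{i-1}‖²_M - ‖z - z_i‖²_M + ‖z̃_i - z_i‖²_M - ‖z̃_i - z_{i-1}‖²_M`.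
Since `σ ≤ 1` and `M ⪰ 0`, the error criterion bounds the last two terms by `η_{i-1} - η_i`,
so the sum telescopes to at most `‖z - z_0‖²_M - ‖z - z_k‖²_M + η_0 - η_k ≤ ‖z - z_0‖²_M + η_0`.
-/

open Matrix

namespace Matrix

variable {R n : Type*} [CommRing R] [Fintype n] {M : Matrix n n R}

theorem IsSymm.mulVec_dotProduct_comm (hM : M.IsSymm) (u v : n → R) :
    (M *ᵥ u) ⬝ᵥ v = (M *ᵥ v) ⬝ᵥ u := by
  rw [dotProduct_comm, dotProduct_mulVec, ← mulVec_transpose, hM.eq]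

theorem IsSymm.two_mul_mulVec_sub_dotProduct_sub (hM : M.IsSymm) (a b t w : n → R) :
    2 * ((M *ᵥ (a - b)) ⬝ᵥ (t - w))
      = (M *ᵥ (w - a)) ⬝ᵥ (w - a) - (M *ᵥ (w - b)) ⬝ᵥ (w - b)
        + (M *ᵥ (t - b)) ⬝ᵥ (t - b) - (M *ᵥ (t - a)) ⬝ᵥ (t - a) := by
  simp only [mulVec_sub, sub_dotProduct, dotProduct_sub]
  rw [hM.mulVec_dotProduct_comm a t, hM.mulVec_dotProduct_comm b t,
    hM.mulVec_dotProduct_comm a w, hM.mulVec_dotProduct_comm b w]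
  ring

theorem IsSymm.two_mul_sum_le_of_descent [LinearOrder R] [IsStrictOrderedRing R] (hM : M.IsSymm)
    (z zt : ℕ → n → R) (η : ℕ → R)
    (hdesc : ∀ k, 1 ≤ k →
      (M *ᵥ (zt k - z k)) ⬝ᵥ (zt k - z k) + η k
        ≤ (M *ᵥ (zt k - z (k - 1))) ⬝ᵥ (zt k - z (k - 1)) + η (k - 1))
    (w : n → R) (m : ℕ) :
    2 * ∑ i ∈ Finset.Icc 1 m, (M *ᵥ (z (i - 1) - z i)) ⬝ᵥ (zt i - w)
      ≤ (M *ᵥ (w - z 0)) ⬝ᵥ (w - z 0) - (M *ᵥ (w - z m)) ⬝ᵥ (w - z m) + η 0 - η m := by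
  induction m with
  | zero => simp
  | succ m ih =>
    rw [Finset.sum_Icc_succ_top (by omega), mul_add,
      hM.two_mul_mulVec_sub_dotProduct_sub]
    have hstep := hdesc (m + 1) (by omega)
    simp only [Nat.add_sub_cancel] at hstep ⊢
    linarith

theorem PosSemidef.mulVec_dotProduct_nonneg {M : Matrix n n ℝ} (hM : M.PosSemidef)
    (u : n → ℝ) : 0 ≤ (M *ᵥ u) ⬝ᵥ u := by
  simpa [dotProduct_comm] using hM.dotProduct_mulVec_nonneg u

end Matrix

theorem stmt18_general (N : ℕ) (M : Matrix (Fin N) (Fin N) ℝ) (hM : M.PosSemidef)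
    (σ : ℝ) (hσ1 : σ < 1)
    (z : ℕ → Fin N → ℝ) (zt : ℕ → Fin N → ℝ) (η : ℕ → ℝ) (hη : ∀ k, 0 ≤ η k)
    (hhpe : ∀ k, 1 ≤ k →
      (M *ᵥ (zt k - z k)) ⬝ᵥ (zt k - z k) + η k
        ≤ σ * ((M *ᵥ (zt k - z (k - 1))) ⬝ᵥ (zt k - z (k - 1))) + η (k - 1)) :
    ∀ k : ℕ, 1 ≤ k → ∀ w : Fin N → ℝ,
      2 * ∑ i ∈ Finset.Icc 1 k, (M *ᵥ (z (i - 1) - z i)) ⬝ᵥ (zt i - w)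
        ≤ (M *ᵥ (w - z 0)) ⬝ᵥ (w - z 0) + η 0 := by
  intro k _ w
  have hsymm : M.IsSymm := isHermitian_iff_isSymm.mp hM.isHermitian
  have hdesc : ∀ k, 1 ≤ k →
      (M *ᵥ (zt k - z k)) ⬝ᵥ (zt k - z k) + η k
        ≤ (M *ᵥ (zt k - z (k - 1))) ⬝ᵥ (zt k - z (k - 1)) + η (k - 1) := by
    intro k hk
    have hq := hM.mulVec_dotProduct_nonneg (zt k - z (k - 1))
    nlinarith [hhpe k hk]
  have hsum := hsymm.two_mul_sum_le_of_descent z zt η hdesc w k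
  linarith [hM.mulVec_dotProduct_nonneg (w - z k), hη k]

/-- For the inexact proximal point scheme,
`2 Σ_{i=1}^{k} ⟨M(z_{i−1} − z_i), z̃_i − z⟩ ≤ ‖z − z_0‖_M² + η_0` for all `z`. -/
theorem stmt18 (N : ℕ) (M : Matrix (Fin N) (Fin N) ℝ) (hM : M.PosSemidef)
    (σ : ℝ) (hσ0 : 0 ≤ σ) (hσ1 : σ < 1)
    (z : ℕ → Fin N → ℝ) (zt : ℕ → Fin N → ℝ) (η : ℕ → ℝ) (hη : ∀ k, 0 ≤ η k)
    (hhpe : ∀ k, 1 ≤ k →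
      (M *ᵥ (zt k - z k)) ⬝ᵥ (zt k - z k) + η k
        ≤ σ * ((M *ᵥ (zt k - z (k - 1))) ⬝ᵥ (zt k - z (k - 1))) + η (k - 1)) :
    ∀ k : ℕ, 1 ≤ k → ∀ w : Fin N → ℝ,
      2 * ∑ i ∈ Finset.Icc 1 k, (M *ᵥ (z (i - 1) - z i)) ⬝ᵥ (zt i - w)
        ≤ (M *ᵥ (w - z 0)) ⬝ᵥ (w - z 0) + η 0 :=
  stmt18_general N M hM σ hσ1 z zt η hη hhpe
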